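/- Let α_A = α_H = 0 and β_A, β_H > 0 with β_A ≠ β_H (class P_NI), let λ ∈ (0,1) and ω₀ ≥ 1, and set q_λ^E := β_A^λ·β_H^{1−λ} (so 0 < q_λ^E < β_λ). Then: (a) H_{λ,1} = exp( (β_A^λ·β_H^{1−λ} − λβ_A − (1−λ)β_H)·ω₀ ) < 1; (b) H_{λ,n} = exp( a_n^{(q_λ^E)}·ω₀ ) for all n ≥ 1, and this sequence is strictly decreasing in n; (c) lim_{n→∞} H_{λ,n} = exp( x₀^{(q_λ^E)}·ω₀ ) ∈ (0,1); (d) lim_{n→∞} (1/n)·log H_{λ,n} = 0. -/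

import Mathlib

open Real Filter

/-- One transition weight of the Poisson Galton–Watson process with immigration:
probability that the next generation size is `y` given the previous size is `x`. -/
noncomputable def gwStep (β α : ℝ) (x y : ℕ) : ℝ :=
  Real.exp (-(β * (x : ℝ) + α)) * (β * (x : ℝ) + α) ^ y / (Nat.factorial y : ℝ)

/-- The `n`-step path law (pmf on `Fin n → ℕ`) with initial generation size `ω₀`. -/
noncomputable def gwPath (β α : ℝ) (ω₀ n : ℕ) (ω : Fin n → ℕ) : ℝ :=
  ∏ k : Fin n,
    gwStep β α
      (if (k : ℕ) = 0 then ω₀ else ω ⟨(k : ℕ) - 1, Nat.lt_of_le_of_lt (Nat.sub_le _ _) k.2⟩)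
      (ω k)

/-- Hellinger integral of order `lam` between the `n`-step path laws. -/
noncomputable def hellinger (βA αA βH αH lam : ℝ) (ω₀ n : ℕ) : ℝ :=
  ∑' ω : Fin n → ℕ, gwPath βA αA ω₀ n ω ^ lam * gwPath βH αH ω₀ n ω ^ (1 - lam)

/-- The recursion `a₀ = 0`, `a_{n+1} = q·e^{a_n} − βl`. -/
noncomputable def aSeq (q βl : ℝ) : ℕ → ℝ
  | 0 => 0
  | n + 1 => q * Real.exp (aSeq q βl n) - βl

/-- The recursion `b₀ = 0`, `b_{n+1} = p·e^{a_n} − αl`. -/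
noncomputable def bSeq (p q βl αl : ℝ) : ℕ → ℝ
  | 0 => 0
  | n + 1 => p * Real.exp (aSeq q βl n) - αl

/-!
Raising the Poisson weights to the powers `λ` and `1 - λ` and multiplying gives
`e^{-β_λ x} (q x)^y / y!` with `q = β_A^λ β_H^{1-λ}`, so the one-step Hellinger kernel sends
`y ↦ e^{c y}` to `x ↦ e^{(q e^c - β_λ) x}`. Peeling off the first generation therefore gives
`H_{λ,n} = exp (a_n ω₀)`. Strict weighted AM-GM gives `q < β_λ`, which makes `a_n` strictly
decreasing; it stays above the negative fixed point `x₀`, so it converges to a fixed point in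
`[x₀, 0)`, and strict convexity of `x ↦ q e^x - x` leaves only `x₀`. Since `a_n` is bounded,
`(log H_{λ,n}) / n → 0`.
-/

lemma hasSum_prod_of_nonneg {α β : Type*} {f : α × β → ℝ} (hf : 0 ≤ f) {g : α → ℝ} {a : ℝ}
    (hfg : ∀ x, HasSum (fun y => f (x, y)) (g x)) (hg : HasSum g a) : HasSum f a := by
  have hs : Summable f := (summable_prod_of_nonneg hf).2
    ⟨fun x => (hfg x).summable, by simpa only [(hfg _).tsum_eq] using hg.summable⟩
  rw [← (hs.hasSum.prod_fiberwise hfg).unique hg]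
  exact hs.hasSum

lemma poisson_rpow {u : ℝ} (hu : 0 ≤ u) (t : ℝ) (y : ℕ) :
    (exp (-u) * u ^ y / y.factorial) ^ t = exp (-(t * u)) * (u ^ t) ^ y / y.factorial ^ t := by
  rw [div_rpow (by positivity) (by positivity), mul_rpow (by positivity) (by positivity),
    ← exp_mul, rpow_pow_comm hu, mul_comm t]
  ring_nf

lemma poisson_rpow_mul_rpow {u v : ℝ} (hu : 0 ≤ u) (hv : 0 ≤ v) (t : ℝ) (y : ℕ) :
    (exp (-u) * u ^ y / y.factorial) ^ t * (exp (-v) * v ^ y / y.factorial) ^ (1 - t)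
      = exp (-(t * u + (1 - t) * v)) * (u ^ t * v ^ (1 - t)) ^ y / y.factorial := by
  have hfac : (y.factorial : ℝ) ^ t * (y.factorial : ℝ) ^ (1 - t) = y.factorial := by
    rw [← rpow_add (by positivity), add_sub_cancel, rpow_one]
  rw [poisson_rpow hu, poisson_rpow hv, div_mul_div_comm, hfac, mul_pow, neg_add, exp_add]
  ring

lemma gwPath_cons (β α : ℝ) (w y n : ℕ) (ω : Fin n → ℕ) :
    gwPath β α w (n + 1) (Fin.cons y ω) = gwStep β α w y * gwPath β α y n ω := by
  rw [gwPath, Fin.prod_univ_succ, gwPath]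
  congr 1
  refine Finset.prod_congr rfl fun ⟨i, hi⟩ _ => ?_
  cases i <;> simp [Fin.cons, Fin.cases_succ']

lemma gwStep_nonneg {β α : ℝ} (hβ : 0 ≤ β) (hα : 0 ≤ α) (x y : ℕ) : 0 ≤ gwStep β α x y := by
  unfold gwStep
  positivity

lemma gwPath_nonneg {β α : ℝ} (hβ : 0 ≤ β) (hα : 0 ≤ α) (w n : ℕ) (ω : Fin n → ℕ) :
    0 ≤ gwPath β α w n ω :=
  Finset.prod_nonneg fun _ _ => gwStep_nonneg hβ hα _ _

section NoImmigration

variable {βA βH : ℝ}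

lemma gwStep_rpow_mul_rpow (hβA : 0 ≤ βA) (hβH : 0 ≤ βH) (lam : ℝ) (x y : ℕ) :
    gwStep βA 0 x y ^ lam * gwStep βH 0 x y ^ (1 - lam)
      = exp (-((lam * βA + (1 - lam) * βH) * x)) * (βA ^ lam * βH ^ (1 - lam) * x) ^ y
        / y.factorial := by
  have hx : (0 : ℝ) ≤ x := x.cast_nonneg
  have hmean : (βA * x) ^ lam * (βH * x) ^ (1 - lam) = βA ^ lam * βH ^ (1 - lam) * x := by
    rw [mul_rpow hβA hx, mul_rpow hβH hx, mul_mul_mul_comm, ← rpow_add' hx (by norm_num),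
      add_sub_cancel, rpow_one]
  simp only [gwStep, add_zero]
  rw [poisson_rpow_mul_rpow (by positivity) (by positivity), hmean]
  ring_nf

lemma hasSum_gwStep_rpow_mul_rpow_mul_exp (hβA : 0 ≤ βA) (hβH : 0 ≤ βH) (lam : ℝ) (x : ℕ)
    (c : ℝ) :
    HasSum (fun y : ℕ => gwStep βA 0 x y ^ lam * gwStep βH 0 x y ^ (1 - lam) * exp (c * y))
      (exp ((βA ^ lam * βH ^ (1 - lam) * exp c - (lam * βA + (1 - lam) * βH)) * x)) := by
  have hexp := (NormedSpace.expSeries_div_hasSum_exp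
    (βA ^ lam * βH ^ (1 - lam) * x * exp c)).mul_left (exp (-((lam * βA + (1 - lam) * βH) * x)))
  rw [← exp_eq_exp_ℝ, ← exp_add] at hexp
  rw [show (βA ^ lam * βH ^ (1 - lam) * exp c - (lam * βA + (1 - lam) * βH)) * x
      = -((lam * βA + (1 - lam) * βH) * x) + βA ^ lam * βH ^ (1 - lam) * x * exp c by ring]
  refine hexp.congr_fun fun y => ?_
  rw [gwStep_rpow_mul_rpow hβA hβH, mul_pow _ (exp c), ← exp_nat_mul]
  ring_nf

theorem hasSum_gwPath_rpow_mul_rpow (hβA : 0 ≤ βA) (hβH : 0 ≤ βH) (lam : ℝ) (n w : ℕ) :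
    HasSum (fun ω : Fin n → ℕ => gwPath βA 0 w n ω ^ lam * gwPath βH 0 w n ω ^ (1 - lam))
      (exp (aSeq (βA ^ lam * βH ^ (1 - lam)) (lam * βA + (1 - lam) * βH) n * w)) := by
  induction n generalizing w with
  | zero => simp [gwPath, aSeq]
  | succ n ih =>
    have hnonneg (m v : ℕ) (ω : Fin m → ℕ) :
        0 ≤ gwPath βA 0 v m ω ^ lam * gwPath βH 0 v m ω ^ (1 - lam) :=
      mul_nonneg (rpow_nonneg (gwPath_nonneg hβA le_rfl _ _ _) _)
        (rpow_nonneg (gwPath_nonneg hβH le_rfl _ _ _) _)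
    have hsplit (y : ℕ) (ω : Fin n → ℕ) :
        gwPath βA 0 w (n + 1) (Fin.cons y ω) ^ lam
            * gwPath βH 0 w (n + 1) (Fin.cons y ω) ^ (1 - lam)
          = (gwStep βA 0 w y ^ lam * gwStep βH 0 w y ^ (1 - lam))
            * (gwPath βA 0 y n ω ^ lam * gwPath βH 0 y n ω ^ (1 - lam)) := by
      rw [gwPath_cons, gwPath_cons,
        mul_rpow (gwStep_nonneg hβA le_rfl _ _) (gwPath_nonneg hβA le_rfl _ _ _),
        mul_rpow (gwStep_nonneg hβH le_rfl _ _) (gwPath_nonneg hβH le_rfl _ _ _)]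
      ring
    rw [← (Fin.consEquiv fun _ => ℕ).hasSum_iff]
    exact hasSum_prod_of_nonneg (fun _ => hnonneg _ _ _)
      (fun y => ((ih y).mul_left _).congr_fun (hsplit y))
      (hasSum_gwStep_rpow_mul_rpow_mul_exp hβA hβH lam w _)

end NoImmigration

section ExpIteration

variable {q βl : ℝ}

lemma aSeq_one : aSeq q βl 1 = q - βl := by simp [aSeq]

lemma strictAnti_aSeq (hq : 0 < q) (hqβ : q < βl) : StrictAnti (aSeq q βl) := by
  refine strictAnti_nat_of_succ_lt fun n => ?_
  induction n with
  | zero => simpa [aSeq] using hqβ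
  | succ n ih =>
    simp only [aSeq] at ih ⊢
    gcongr

lemma le_aSeq_of_fixedPoint {x : ℝ} (hq : 0 ≤ q) (hx : x ≤ 0) (hfix : q * exp x - βl = x) (n : ℕ) :
    x ≤ aSeq q βl n := by
  induction n with
  | zero => exact hx
  | succ n ih =>
    rw [aSeq, ← hfix]
    gcongr

/-- `x ↦ q·eˣ − x` is strictly convex and `< βl` at `0`, so it takes the value `βl` at most once
on `(-∞, 0]`. -/
lemma le_of_fixedPoint_of_neg {x y : ℝ} (hq : 0 < q) (hqβ : q < βl) (hy : y < 0)
    (hxfix : q * exp x - βl = x) (hyfix : q * exp y - βl = y) : y ≤ x := by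
  by_contra! hxy
  have hx : x < 0 := hxy.trans hy
  set t := y / x
  have ht0 : 0 < t := div_pos_of_neg_of_neg hy hx
  have ht1 : t < 1 := (div_lt_one_of_neg hx).2 hxy
  have hyt : t * x = y := div_mul_cancel₀ y hx.ne
  have hconv := strictConvexOn_exp.2 (Set.mem_univ x) (Set.mem_univ 0) hx.ne ht0
    (sub_pos.2 ht1) (add_sub_cancel t 1)
  simp only [smul_eq_mul, mul_zero, add_zero, exp_zero, mul_one, hyt] at hconv
  nlinarith [mul_lt_mul_of_pos_left hconv hq]

lemma tendsto_aSeq {x₀ : ℝ} (hq : 0 < q) (hqβ : q < βl) (hx₀ : x₀ < 0)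
    (hfix : q * exp x₀ - βl = x₀) : Tendsto (aSeq q βl) atTop (nhds x₀) := by
  have hbdd : BddBelow (Set.range (aSeq q βl)) :=
    ⟨x₀, Set.forall_mem_range.2 (le_aSeq_of_fixedPoint hq.le hx₀.le hfix)⟩
  have hL := tendsto_atTop_ciInf (strictAnti_aSeq hq hqβ).antitone hbdd
  have hLfix : q * exp (⨅ n, aSeq q βl n) - βl = ⨅ n, aSeq q βl n :=
    tendsto_nhds_unique (((continuous_exp.tendsto _).comp hL).const_mul q |>.sub_const βl)
      (hL.comp (tendsto_add_atTop_nat 1))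
  have hLneg : ⨅ n, aSeq q βl n < 0 :=
    (ciInf_le hbdd 1).trans_lt (by rw [aSeq_one]; linarith)
  rwa [le_antisymm (le_of_fixedPoint_of_neg hq hqβ hLneg hfix hLfix)
    (le_ciInf (le_aSeq_of_fixedPoint hq.le hx₀.le hfix))] at hL

end ExpIteration

/-- Detailed behaviour of the Hellinger integrals in the no-immigration case
`P_NI` (`α_A = α_H = 0`, `β_A ≠ β_H`):  exact value, strict decrease, limit, and
vanishing exponential rate. Here `x₀` is the unique negative fixed point of
`x ↦ q_λ^E·e^x − β_λ`. -/
theorem hellinger_NI_detailed (βA βH lam : ℝ)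
    (hβA : 0 < βA) (hβH : 0 < βH) (hβne : βA ≠ βH)
    (hlam : lam ∈ Set.Ioo (0 : ℝ) 1) (ω₀ : ℕ) (hω₀ : 1 ≤ ω₀)
    (qE βl : ℝ) (hqE : qE = βA ^ lam * βH ^ (1 - lam)) (hβl : βl = lam * βA + (1 - lam) * βH)
    (x₀ : ℝ) (hx₀neg : x₀ < 0) (hx₀fix : qE * Real.exp x₀ - βl = x₀) :
    (0 < qE ∧ qE < βl) ∧
    (hellinger βA 0 βH 0 lam ω₀ 1
        = Real.exp ((βA ^ lam * βH ^ (1 - lam) - lam * βA - (1 - lam) * βH) * (ω₀ : ℝ)) ∧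
      hellinger βA 0 βH 0 lam ω₀ 1 < 1) ∧
    (∀ n : ℕ, 1 ≤ n → hellinger βA 0 βH 0 lam ω₀ n = Real.exp (aSeq qE βl n * (ω₀ : ℝ))) ∧
    (∀ n : ℕ, 1 ≤ n → hellinger βA 0 βH 0 lam ω₀ (n + 1) < hellinger βA 0 βH 0 lam ω₀ n) ∧
    (Tendsto (fun n : ℕ => hellinger βA 0 βH 0 lam ω₀ n) atTop (nhds (Real.exp (x₀ * (ω₀ : ℝ)))) ∧
      Real.exp (x₀ * (ω₀ : ℝ)) ∈ Set.Ioo (0 : ℝ) 1) ∧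
    Tendsto (fun n : ℕ => (1 / (n : ℝ)) * Real.log (hellinger βA 0 βH 0 lam ω₀ n)) atTop
      (nhds 0) := by
  obtain ⟨hl0, hl1⟩ := hlam
  have hq : 0 < qE := hqE ▸ by positivity
  have hqβ : qE < βl := by
    rw [hqE, hβl]
    exact (geom_mean_lt_arith_mean2_weighted_iff_of_pos hl0 (sub_pos.2 hl1) hβA.le hβH.le
      (add_sub_cancel lam 1)).2 hβne
  have hω : (0 : ℝ) < ω₀ := by exact_mod_cast hω₀
  have hH (n : ℕ) : hellinger βA 0 βH 0 lam ω₀ n = exp (aSeq qE βl n * ω₀) := by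
    rw [hqE, hβl]
    exact (hasSum_gwPath_rpow_mul_rpow hβA.le hβH.le lam n ω₀).tsum_eq
  have ha := tendsto_aSeq hq hqβ hx₀neg hx₀fix
  refine ⟨⟨hq, hqβ⟩, ⟨?_, ?_⟩, fun n _ => hH n, fun n _ => ?_, ⟨?_, exp_pos _, ?_⟩, ?_⟩
  · rw [hH, aSeq_one, hqE, hβl, sub_sub]
  · rw [hH, aSeq_one, exp_lt_one_iff]
    exact mul_neg_of_neg_of_pos (sub_neg.2 hqβ) hω
  · rw [hH, hH]
    gcongr
    exact strictAnti_aSeq hq hqβ n.lt_succ_self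
  · simpa only [hH] using (ha.mul_const (ω₀ : ℝ)).rexp
  · exact exp_lt_one_iff.2 (mul_neg_of_neg_of_pos hx₀neg hω)
  · simpa [hH] using tendsto_one_div_atTop_nhds_zero_nat.mul (ha.mul_const (ω₀ : ℝ))
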